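/- Let n be a nonzero integer and define q⁰(z) = (90ζ(3) − n²π⁴ + 9z²ζ(3))/z and q¹(z) = (90ζ(3) − n²π⁴ + 54z²ζ(3))/z². Then the function f(y) = (8·σ₂(|n|)/(9π|n|³)) · ( q⁰(π|n|y)·K₀(2π|n|y) + q¹(π|n|y)·K₁(2π|n|y) ) satisfies the ordinary differential equation y²·f''(y) − (12 + 4π²n²y²)·f(y) = −8π·( 2ζ(3)·y² + 4ζ(2) )·(σ₂(|n|)/|n|)·K₁(2π|n|y) for all y > 0. -/

import Mathlib

open Real

/-- Riemann zeta function for real arguments `s > 1`, as a sum. -/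
noncomputable def zetaR (s : ℝ) : ℝ := ∑' n : ℕ, 1 / ((n : ℝ) + 1) ^ s

/-- Modified Bessel function `K₀`. -/
noncomputable def K0 (x : ℝ) : ℝ := ∫ t in Set.Ioi (0 : ℝ), Real.exp (-x * Real.cosh t)

/-- Modified Bessel function `K₁`. -/
noncomputable def K1 (x : ℝ) : ℝ :=
  ∫ t in Set.Ioi (0 : ℝ), Real.exp (-x * Real.cosh t) * Real.cosh t

/-- Divisor sum `σ₂(m) = ∑_{d ∣ m} d²`. -/
def sigma2 (m : ℕ) : ℕ := ∑ d ∈ m.divisors, d ^ 2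

/-- The coefficient `q⁰`. -/
noncomputable def q0 (n : ℤ) (z : ℝ) : ℝ :=
  (90 * zetaR 3 - (n : ℝ) ^ 2 * π ^ 4 + 9 * z ^ 2 * zetaR 3) / z

/-- The coefficient `q¹`. -/
noncomputable def q1 (n : ℤ) (z : ℝ) : ℝ :=
  (90 * zetaR 3 - (n : ℝ) ^ 2 * π ^ 4 + 54 * z ^ 2 * zetaR 3) / z ^ 2

/-- The particular solution `f̂^P_{n,0}`. -/
noncomputable def fP (n : ℤ) (y : ℝ) : ℝ :=
  8 * (sigma2 n.natAbs : ℝ) / (9 * π * |(n : ℝ)| ^ 3) *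
    (q0 n (π * |(n : ℝ)| * y) * K0 (2 * π * |(n : ℝ)| * y) +
      q1 n (π * |(n : ℝ)| * y) * K1 (2 * π * |(n : ℝ)| * y))

/-!
Write `Kₘ(x) = ∫₀^∞ e^{-x cosh t} coshᵐ t dt`. Differentiating under the integral gives
`Kₘ' = -Kₘ₊₁`, and integrating `d/dt (e^{-x cosh t} sinh t)` over `(0, ∞)` gives
`x K₂ = x K₀ + K₁`; hence `K₀' = -K₁` and `K₁' = -K₀ - K₁ / x`. So the space of combinations
`a(y) K₀(l y) + b(y) K₁(l y)` is closed under `d/dy`, and for Laurent coefficients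
`a = α / y + β y`, `b = γ / y² + δ` the operator `y² d²/dy² - (12 + l² y²)` annihilates the `K₀`
component as soon as `l γ = 2 α` and `l δ = 12 β`. The function `fP n` is such a combination with
`l = 2π|n|`, and with `ζ(2) = π² / 6` its remaining `K₁` coefficient is the claimed right-hand side.
-/

open MeasureTheory Set Filter Topology

lemma self_le_cosh (t : ℝ) : t ≤ cosh t := by
  rcases le_total t 0 with ht | ht
  · linarith [one_le_cosh t]
  · exact (self_le_sinh_iff.2 ht).trans (sinh_lt_cosh t).le

lemma cosh_pow_mul_exp_neg_le (k : ℕ) {c : ℝ} (hc : 0 < c) (t : ℝ) :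
    cosh t ^ k * exp (-c * cosh t) ≤ k.factorial * (2 / c) ^ k * exp (-(c / 2) * t) := by
  have hpow : (c / 2 * cosh t) ^ k ≤ k.factorial * exp (c / 2 * cosh t) := by
    have := Real.pow_div_factorial_le_exp (c / 2 * cosh t) (by positivity) k
    rw [div_le_iff₀ (by positivity)] at this
    linarith
  have hcosh : cosh t ^ k ≤ k.factorial * (2 / c) ^ k * exp (c / 2 * cosh t) := by
    have h2c : cosh t ^ k = (2 / c) ^ k * (c / 2 * cosh t) ^ k := by
      rw [← mul_pow]; field_simp
    rw [h2c, mul_comm (k.factorial : ℝ), mul_assoc]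
    gcongr
  calc cosh t ^ k * exp (-c * cosh t)
      ≤ k.factorial * (2 / c) ^ k * exp (c / 2 * cosh t) * exp (-c * cosh t) := by gcongr
    _ = k.factorial * (2 / c) ^ k * exp (-(c / 2) * cosh t) := by
      rw [mul_assoc, ← exp_add]; ring_nf
    _ ≤ k.factorial * (2 / c) ^ k * exp (-(c / 2) * t) := by
      gcongr _ * ?_
      exact exp_le_exp.2 (by nlinarith [self_le_cosh t])

lemma integrableOn_exp_neg_mul_cosh_mul_cosh_pow (k : ℕ) {c : ℝ} (hc : 0 < c) :
    IntegrableOn (fun t => exp (-c * cosh t) * cosh t ^ k) (Ioi 0) := by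
  refine Integrable.mono' ((exp_neg_integrableOn_Ioi 0 (half_pos hc)).const_mul
    (k.factorial * (2 / c) ^ k)) (by fun_prop) (ae_of_all _ fun t => ?_)
  rw [Real.norm_of_nonneg (by positivity), mul_comm]
  exact cosh_pow_mul_exp_neg_le k hc t

noncomputable def coshMoment (m : ℕ) (x : ℝ) : ℝ :=
  ∫ t in Ioi 0, exp (-x * cosh t) * cosh t ^ m

lemma K0_eq_coshMoment : K0 = coshMoment 0 := by
  ext x; simp [K0, coshMoment]

lemma K1_eq_coshMoment : K1 = coshMoment 1 := by
  ext x; simp [K1, coshMoment]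

lemma hasDerivAt_coshMoment (k : ℕ) {x : ℝ} (hx : 0 < x) :
    HasDerivAt (coshMoment k) (-coshMoment (k + 1) x) x := by
  have hx2 : 0 < x / 2 := half_pos hx
  have key := hasDerivAt_integral_of_dominated_loc_of_deriv_le
    (F := fun s t => exp (-s * cosh t) * cosh t ^ k)
    (F' := fun s t => -(exp (-s * cosh t) * cosh t ^ (k + 1)))
    (bound := fun t => exp (-(x / 2) * cosh t) * cosh t ^ (k + 1))
    (μ := volume.restrict (Ioi 0)) (Metric.ball_mem_nhds x hx2)
    (Eventually.of_forall fun _ => by fun_prop)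
    (integrableOn_exp_neg_mul_cosh_mul_cosh_pow k hx) (by fun_prop)
    (ae_of_all _ fun t s hs => ?_)
    (integrableOn_exp_neg_mul_cosh_mul_cosh_pow (k + 1) hx2)
    (ae_of_all _ fun t s _ => ?_)
  · have h := key.2
    rw [integral_neg] at h
    exact h
  · have hs' : x / 2 < s := by
      have := abs_lt.1 (mem_ball_iff_norm.1 hs); linarith
    rw [norm_neg, Real.norm_of_nonneg (by positivity)]
    gcongr
  · have h : HasDerivAt (fun s => -s * cosh t) (-cosh t) s := by
      simpa using (hasDerivAt_neg s).mul_const (cosh t)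
    exact (h.exp.mul_const _).congr_deriv (by ring)

lemma tendsto_exp_neg_mul_cosh_mul_sinh {x : ℝ} (hx : 0 < x) :
    Tendsto (fun t => exp (-x * cosh t) * sinh t) atTop (𝓝 0) := by
  have hdecay : Tendsto (fun t => 2 / x * exp (-(x / 2) * t)) atTop (𝓝 0) := by
    simpa using (tendsto_exp_neg_atTop_nhds_zero.comp
      (tendsto_id.const_mul_atTop (half_pos hx))).const_mul (2 / x)
  refine squeeze_zero_norm' ?_ hdecay
  filter_upwards [eventually_ge_atTop 0] with t ht
  have hb := cosh_pow_mul_exp_neg_le 1 hx t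
  simp only [pow_one, Nat.factorial_one, Nat.cast_one, one_mul] at hb
  rw [norm_mul, Real.norm_of_nonneg (exp_pos _).le, Real.norm_of_nonneg (sinh_nonneg_iff.2 ht)]
  nlinarith [sinh_lt_cosh t, exp_pos (-x * cosh t)]

lemma mul_coshMoment_two {x : ℝ} (hx : 0 < x) :
    x * coshMoment 2 x = x * coshMoment 0 x + coshMoment 1 x := by
  set E : ℝ → ℝ := fun t => exp (-x * cosh t)
  have hderiv : ∀ t, HasDerivAt (fun t => E t * sinh t)
      (E t * cosh t ^ 1 - x * (E t * cosh t ^ 2) + x * (E t * cosh t ^ 0)) t := fun t => by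
    have h := (((hasDerivAt_cosh t).const_mul (-x)).exp).mul (hasDerivAt_sinh t)
    refine h.congr_deriv ?_
    linear_combination (-x * E t) * sinh_sq t
  have hi : ∀ k, IntegrableOn (fun t => E t * cosh t ^ k) (Ioi 0) :=
    fun k => integrableOn_exp_neg_mul_cosh_mul_cosh_pow k hx
  have hsub : IntegrableOn (fun t => E t * cosh t ^ 1 - x * (E t * cosh t ^ 2)) (Ioi 0) :=
    (hi 1).sub ((hi 2).const_mul x)
  have hparts := integral_Ioi_of_hasDerivAt_of_tendsto (hderiv 0).continuousAt.continuousWithinAt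
    (fun t _ => hderiv t) (hsub.add ((hi 0).const_mul x)) (tendsto_exp_neg_mul_cosh_mul_sinh hx)
  rw [integral_add hsub ((hi 0).const_mul x), integral_sub (hi 1) ((hi 2).const_mul x),
    integral_const_mul, integral_const_mul] at hparts
  simp only [sinh_zero, mul_zero, sub_zero] at hparts
  change coshMoment 1 x - x * coshMoment 2 x + x * coshMoment 0 x = 0 at hparts
  linarith

lemma hasDerivAt_K0 {x : ℝ} (hx : 0 < x) : HasDerivAt K0 (-K1 x) x := by
  rw [K0_eq_coshMoment, K1_eq_coshMoment]
  exact hasDerivAt_coshMoment 0 hx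

lemma hasDerivAt_K1 {x : ℝ} (hx : 0 < x) : HasDerivAt K1 (-K0 x - K1 x / x) x := by
  rw [K0_eq_coshMoment, K1_eq_coshMoment]
  convert hasDerivAt_coshMoment 1 hx using 1
  have hparts := mul_coshMoment_two hx
  field_simp
  linarith

lemma hasDerivAt_mul_K0_add_mul_K1 {l y : ℝ} (hl : 0 < l) (hy : 0 < y) {a b : ℝ → ℝ} {a' b' : ℝ}
    (ha : HasDerivAt a a' y) (hb : HasDerivAt b b' y) :
    HasDerivAt (fun y => a y * K0 (l * y) + b y * K1 (l * y))
      ((a' - l * b y) * K0 (l * y) + (b' - l * a y - b y / y) * K1 (l * y)) y := by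
  have hly : 0 < l * y := mul_pos hl hy
  have hlin : HasDerivAt (fun y => l * y) l y := by simpa using (hasDerivAt_id y).const_mul l
  have hK0 : HasDerivAt (fun y => K0 (l * y)) (-K1 (l * y) * l) y :=
    (hasDerivAt_K0 hly).comp y hlin
  have hK1 : HasDerivAt (fun y => K1 (l * y)) ((-K0 (l * y) - K1 (l * y) / (l * y)) * l) y :=
    (hasDerivAt_K1 hly).comp y hlin
  refine ((ha.mul hK0).add (hb.mul hK1)).congr_deriv ?_
  field_simp
  ring

lemma deriv_deriv_mul_K0_add_mul_K1 {l : ℝ} (hl : 0 < l) {F a a' a'' b b' b'' : ℝ → ℝ}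
    (hF : ∀ y > 0, F y = a y * K0 (l * y) + b y * K1 (l * y))
    (ha : ∀ y > 0, HasDerivAt a (a' y) y) (ha' : ∀ y > 0, HasDerivAt a' (a'' y) y)
    (hb : ∀ y > 0, HasDerivAt b (b' y) y) (hb' : ∀ y > 0, HasDerivAt b' (b'' y) y)
    {y : ℝ} (hy : 0 < y) :
    deriv (deriv F) y =
      (a'' y - 2 * l * b' y + l ^ 2 * a y + l * b y / y) * K0 (l * y) +
      (b'' y - 2 * l * a' y + l ^ 2 * b y - 2 * b' y / y + 2 * b y / y ^ 2 + l * a y / y) *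
        K1 (l * y) := by
  have hderiv : deriv F =ᶠ[𝓝 y] fun y =>
      (a' y - l * b y) * K0 (l * y) + (b' y - l * a y - b y / y) * K1 (l * y) := by
    filter_upwards [Ioi_mem_nhds hy] with z hz
    have hFz : F =ᶠ[𝓝 z] fun y => a y * K0 (l * y) + b y * K1 (l * y) := by
      filter_upwards [Ioi_mem_nhds hz] with w hw using hF w hw
    exact ((hasDerivAt_mul_K0_add_mul_K1 hl hz (ha z hz) (hb z hz)).congr_of_eventuallyEq
      hFz).deriv
  have hA : HasDerivAt (fun y => a' y - l * b y) (a'' y - l * b' y) y :=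
    (ha' y hy).sub ((hb y hy).const_mul l)
  have hB : HasDerivAt (fun y => b' y - l * a y - b y / y)
      (b'' y - l * a' y - (b' y * y - b y * 1) / y ^ 2) y :=
    ((hb' y hy).sub ((ha y hy).const_mul l)).sub ((hb y hy).div (hasDerivAt_id y) hy.ne')
  rw [hderiv.deriv_eq, (hasDerivAt_mul_K0_add_mul_K1 hl hy hA hB).deriv]
  field_simp
  ring

lemma hasDerivAt_const_div_pow (c : ℝ) (k : ℕ) {y : ℝ} (hy : y ≠ 0) :
    HasDerivAt (fun y => c / y ^ k) (-(k * c) / y ^ (k + 1)) y := by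
  refine ((hasDerivAt_const y c).div (hasDerivAt_pow k y) (pow_ne_zero _ hy)).congr_deriv ?_
  rcases k with _ | k
  · simp
  · simp only [Nat.add_sub_cancel]
    field_simp
    ring

lemma sq_mul_deriv_deriv_sub_eq_mul_K1 {l α β γ δ : ℝ} (hl : 0 < l) (hγ : l * γ = 2 * α)
    (hδ : l * δ = 12 * β) {F : ℝ → ℝ}
    (hF : ∀ y > 0, F y = (α / y + β * y) * K0 (l * y) + (γ / y ^ 2 + δ) * K1 (l * y))
    {y : ℝ} (hy : 0 < y) :
    y ^ 2 * deriv (deriv F) y - (12 + l ^ 2 * y ^ 2) * F y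
      = (3 * l * α - 10 * δ - l * β * y ^ 2) * K1 (l * y) := by
  have ha : ∀ y > 0, HasDerivAt (fun y => α / y + β * y) (-α / y ^ 2 + β) y := fun y hy =>
    ((hasDerivAt_inv hy.ne').const_mul α |>.add ((hasDerivAt_id' y).const_mul β)).congr_deriv
      (by field_simp)
  have ha' : ∀ y > 0, HasDerivAt (fun y => -α / y ^ 2 + β) (2 * α / y ^ 3) y := fun y hy =>
    ((hasDerivAt_const_div_pow (-α) 2 hy.ne').add_const β).congr_deriv (by norm_num)
  have hb : ∀ y > 0, HasDerivAt (fun y => γ / y ^ 2 + δ) (-2 * γ / y ^ 3) y := fun y hy =>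
    ((hasDerivAt_const_div_pow γ 2 hy.ne').add_const δ).congr_deriv (by norm_num)
  have hb' : ∀ y > 0, HasDerivAt (fun y => -2 * γ / y ^ 3) (6 * γ / y ^ 4) y := fun y hy =>
    (hasDerivAt_const_div_pow (-2 * γ) 3 hy.ne').congr_deriv (by norm_num; ring)
  rw [deriv_deriv_mul_K0_add_mul_K1 hl hF ha ha' hb hb' hy, hF y hy]
  have hK0 : (y ^ 2 * (2 * α / y ^ 3 - 2 * l * (-2 * γ / y ^ 3) + l ^ 2 * (α / y + β * y)
      + l * (γ / y ^ 2 + δ) / y) - (12 + l ^ 2 * y ^ 2) * (α / y + β * y)) = 0 := by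
    field_simp
    linear_combination 5 * hγ + y ^ 2 * hδ
  have hK1 : y ^ 2 * (6 * γ / y ^ 4 - 2 * l * (-α / y ^ 2 + β) + l ^ 2 * (γ / y ^ 2 + δ)
      - 2 * (-2 * γ / y ^ 3) / y + 2 * (γ / y ^ 2 + δ) / y ^ 2 + l * (α / y + β * y) / y)
      - (12 + l ^ 2 * y ^ 2) * (γ / y ^ 2 + δ) = 3 * l * α - 10 * δ - l * β * y ^ 2 := by
    field_simp
    ring
  linear_combination K0 (l * y) * hK0 + K1 (l * y) * hK1

lemma zetaR_two : zetaR 2 = π ^ 2 / 6 := by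
  have h := (hasSum_nat_add_iff (f := fun n : ℕ => (1 : ℝ) / (n : ℝ) ^ 2) 1).2
    (by simpa using hasSum_zeta_two)
  simp only [zetaR, Real.rpow_two]
  simpa using h.tsum_eq

/-- the function `fP n` solves the inhomogeneous ODE for the
`(n,0)` mode. -/
theorem mode_n0_ode (n : ℤ) (hn : n ≠ 0) :
    ∀ y : ℝ, 0 < y →
      y ^ 2 * deriv (deriv (fP n)) y - (12 + 4 * π ^ 2 * (n : ℝ) ^ 2 * y ^ 2) * fP n y
      = -8 * π * (2 * zetaR 3 * y ^ 2 + 4 * zetaR 2) * ((sigma2 n.natAbs : ℝ) / |(n : ℝ)|) *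
          K1 (2 * π * |(n : ℝ)| * y) := by
  intro y hy
  have hN : 0 < |(n : ℝ)| := abs_pos.2 (Int.cast_ne_zero.2 hn)
  have hn2 : (n : ℝ) ^ 2 = |(n : ℝ)| ^ 2 := (sq_abs _).symm
  have hode := sq_mul_deriv_deriv_sub_eq_mul_K1 (F := fP n) (l := 2 * π * |(n : ℝ)|)
    (α := 8 * sigma2 n.natAbs / (9 * π * |(n : ℝ)| ^ 3) * (90 * zetaR 3 - n ^ 2 * π ^ 4) /
      (π * |(n : ℝ)|))
    (β := 8 * sigma2 n.natAbs / (9 * π * |(n : ℝ)| ^ 3) * 9 * (π * |(n : ℝ)|) * zetaR 3)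
    (γ := 8 * sigma2 n.natAbs / (9 * π * |(n : ℝ)| ^ 3) * (90 * zetaR 3 - n ^ 2 * π ^ 4) /
      (π * |(n : ℝ)|) ^ 2)
    (δ := 8 * sigma2 n.natAbs / (9 * π * |(n : ℝ)| ^ 3) * 54 * zetaR 3)
    (by positivity) (by field_simp) (by ring)
    (fun z hz => by simp only [fP, q0, q1]; field_simp) hy
  rw [show 4 * π ^ 2 * (n : ℝ) ^ 2 * y ^ 2 = (2 * π * |(n : ℝ)|) ^ 2 * y ^ 2 by rw [hn2]; ring,
    hode, zetaR_two, hn2]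
  field_simp
  ring
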